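/- (Good level selection.) Let σ > 1, g ∈ L^σ(ℝ^{d+1}) nonnegative, m₀ ∈ ℕ and γ > 0. Then there exists m₁ ∈ {m₀, ..., 2m₀ − 1} such that the level λ := γ 2^{m₁+1} satisfies λ^σ · ℒ^{d+1}({|g| > λ}) ≤ (c/m₀) ∫_{ℝ^{d+1}} |g|^σ dx, where c depends only on σ. -/

import Mathlib

open MeasureTheory Real Set
open scoped ENNReal Topology

noncomputable section

/-- Euclidean space `ℝ^d`. -/
abbrev Euc (d : ℕ) := EuclideanSpace ℝ (Fin d)

/-- `d×d` real matrices. -/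
abbrev Mat (d : ℕ) := Matrix (Fin d) (Fin d) ℝ

variable {d : ℕ}

/-- Frobenius dot product `X : Y` of matrices. -/
def mdot (X Y : Mat d) : ℝ := ∑ i, ∑ j, X i j * Y i j

/-- Frobenius norm of a matrix. -/
def mnorm (X : Mat d) : ℝ := Real.sqrt (mdot X X)

/-- Euclidean dot product of vectors. -/
def edot (a b : Euc d) : ℝ := ∑ i, a i * b i

/-- Gradient matrix `(∇u)_{ij} = ∂_j u_i` of a vector field. -/
def grad (u : Euc d → Euc d) (x : Euc d) : Mat d :=
  Matrix.of fun i j => fderiv ℝ (fun y => u y i) x (EuclideanSpace.single j 1)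

/-- Symmetric gradient `ε(u) = (∇u + ∇uᵀ)/2`. -/
def symGrad (u : Euc d → Euc d) (x : Euc d) : Mat d :=
  Matrix.of fun i j => (grad u x i j + grad u x j i) / 2

/-- Divergence of a vector field. -/
def divg (u : Euc d → Euc d) (x : Euc d) : ℝ := ∑ i, grad u x i i

/-- Gradient of a scalar field. -/
def gradS (p : Euc d → ℝ) (x : Euc d) (i : Fin d) : ℝ :=
  fderiv ℝ p x (EuclideanSpace.single i 1)

/-- Euclidean norm of the gradient of a scalar field. -/
def gradSnorm (p : Euc d → ℝ) (x : Euc d) : ℝ :=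
  Real.sqrt (∑ i, (gradS p x i) ^ 2)

/-- Norm of the full second gradient `∇²u` of a vector field. -/
def grad2norm (u : Euc d → Euc d) (x : Euc d) : ℝ :=
  Real.sqrt (∑ i, ∑ j, ∑ k,
    (fderiv ℝ (fun y => grad u y i j) x (EuclideanSpace.single k 1)) ^ 2)

/-- An elliptic tensor `𝒜`: `𝒜ξ:ξ ≥ λ|ξ|²` for some `λ > 0`. -/
def IsElliptic (A : Mat d →ₗ[ℝ] Mat d) : Prop :=
  ∃ lam > (0 : ℝ), ∀ ξ : Mat d, lam * mdot ξ ξ ≤ mdot (A ξ) ξ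

/-- A bounded domain with `C²`-boundary, described by a `C²` defining function
with nonvanishing gradient on the boundary. -/
def IsC2BoundedDomain (Ω : Set (Euc d)) : Prop :=
  IsOpen Ω ∧ Bornology.IsBounded Ω ∧ Ω.Nonempty ∧
    ∃ ρ : Euc d → ℝ, ContDiff ℝ 2 ρ ∧ Ω = {x | ρ x < 0} ∧
      ∀ x ∈ frontier Ω, fderiv ℝ ρ x ≠ 0

/-- Smooth compactly supported divergence-free test functions on `Ω`. -/
def TestDiv (Ω : Set (Euc d)) (φ : Euc d → Euc d) : Prop :=
  ContDiff ℝ (⊤ : ℕ∞) φ ∧ HasCompactSupport φ ∧ tsupport φ ⊆ Ω ∧ ∀ x, divg φ x = 0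

/-- Joint smoothness of a space-time vector field. -/
def SmoothST (φ : ℝ → Euc d → Euc d) : Prop :=
  ContDiff ℝ (⊤ : ℕ∞) (fun p : ℝ × Euc d => φ p.1 p.2)

/-- Time derivative of a space-time vector field. -/
def tderiv (φ : ℝ → Euc d → Euc d) (t : ℝ) (x : Euc d) : Euc d :=
  deriv (fun s => φ s x) t

/-- Smooth space-time test functions, compactly supported in `S` and
divergence-free in the space variable. -/
def TestDivST (S : Set (ℝ × Euc d)) (φ : ℝ → Euc d → Euc d) : Prop :=
  SmoothST φ ∧ HasCompactSupport (fun p : ℝ × Euc d => φ p.1 p.2) ∧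
    tsupport (fun p : ℝ × Euc d => φ p.1 p.2) ⊆ S ∧ ∀ t x, divg (φ t) x = 0

/-- Smooth space-time test functions, compactly supported in `S`
(not necessarily divergence-free). -/
def TestST (S : Set (ℝ × Euc d)) (φ : ℝ → Euc d → Euc d) : Prop :=
  SmoothST φ ∧ HasCompactSupport (fun p : ℝ × Euc d => φ p.1 p.2) ∧
    tsupport (fun p : ℝ × Euc d => φ p.1 p.2) ⊆ S

private lemma tele_sum (f : ℕ → ℝ) (a b : ℕ) (h : a ≤ b) :
    ∑ m ∈ Finset.Ico a b, (f (m + 1) - f m) = f b - f a := by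
  induction b with
  | zero => simp [Nat.le_zero.mp h]
  | succ n ih =>
    rcases Nat.lt_or_ge a (n+1) with h' | h'
    · have ha : a ≤ n := Nat.lt_succ_iff.mp h'
      rw [Finset.sum_Ico_succ_top ha, ih ha]; ring
    · have : a = n + 1 := le_antisymm h h'
      simp [this]

private lemma ptwise (σ : ℝ) (hσ : 1 ≤ σ) {γ : ℝ} (hγ : 0 < γ) (m₀ n : ℕ) (hm₀ : 1 ≤ m₀)
    (t : ℝ) (ht : 0 ≤ t) :
    ∑ m ∈ Finset.Ico m₀ n,
      (if γ * 2 ^ (m + 1) < t then (γ * 2 ^ (m + 1)) ^ σ - (γ * 2 ^ m) ^ σ else 0)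
      ≤ t ^ σ := by
  have hσ0 : (0:ℝ) ≤ σ := le_trans zero_le_one hσ
  have hpos : ∀ i : ℕ, (0:ℝ) < γ * 2 ^ i := fun i => by positivity
  have htσ : (0:ℝ) ≤ t ^ σ := Real.rpow_nonneg ht σ
  have hSne : {m : ℕ | t ≤ γ * 2 ^ (m + 1)}.Nonempty := by
    obtain ⟨k, hk⟩ := pow_unbounded_of_one_lt (t / γ) one_lt_two
    refine ⟨k, ?_⟩
    show t ≤ γ * 2 ^ (k + 1)
    have h1 : t < γ * 2 ^ k := by rwa [div_lt_iff₀ hγ, mul_comm] at hk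
    have h2 : γ * 2 ^ k ≤ γ * 2 ^ (k + 1) :=
      mul_le_mul_of_nonneg_left (pow_le_pow_right₀ one_le_two (Nat.le_succ k)) hγ.le
    linarith
  set K := sInf {m : ℕ | t ≤ γ * 2 ^ (m + 1)} with hKdef
  have hKmem : t ≤ γ * 2 ^ (K + 1) := Nat.sInf_mem hSne
  have hK : ∀ m : ℕ, (γ * 2 ^ (m + 1) < t ↔ m < K) := by
    intro m
    constructor
    · intro h
      by_contra hh
      push_neg at hh
      have : γ * 2 ^ (K + 1) ≤ γ * 2 ^ (m + 1) :=
        mul_le_mul_of_nonneg_left (pow_le_pow_right₀ one_le_two (by omega)) hγ.le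
      linarith
    · intro h
      have h2 := Nat.notMem_of_lt_sInf (hKdef ▸ h)
      simp only [Set.mem_setOf_eq, not_le] at h2
      exact h2
  rcases le_or_gt K m₀ with hKm | hmK
  · rw [Finset.sum_eq_zero]
    · exact htσ
    · intro m hm
      rw [if_neg]
      rw [hK]
      have := (Finset.mem_Ico.mp hm).1
      omega
  rcases le_or_gt n m₀ with hn | hn
  · rw [Finset.Ico_eq_empty (by omega), Finset.sum_empty]; exact htσ
  set N := min n K with hNdef
  have hm₀N : m₀ ≤ N := le_min hn.le hmK.le
  have hNn : N ≤ n := min_le_left _ _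
  have hNK : N ≤ K := min_le_right _ _
  rw [← Finset.sum_Ico_consecutive _ hm₀N hNn]
  have h2 : (∑ m ∈ Finset.Ico N n,
      if γ * 2 ^ (m + 1) < t then (γ * 2 ^ (m + 1)) ^ σ - (γ * 2 ^ m) ^ σ else 0) = 0 := by
    rcases le_or_gt K n with hKn | hnK
    · refine Finset.sum_eq_zero fun m hm => ?_
      rw [if_neg]
      rw [hK]
      have h3 := (Finset.mem_Ico.mp hm).1
      omega
    · rw [show N = n by omega, Finset.Ico_self, Finset.sum_empty]
  rw [h2, add_zero]
  have h1 : (∑ m ∈ Finset.Ico m₀ N,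
      if γ * 2 ^ (m + 1) < t then (γ * 2 ^ (m + 1)) ^ σ - (γ * 2 ^ m) ^ σ else 0)
      = (γ * 2 ^ N) ^ σ - (γ * 2 ^ m₀) ^ σ := by
    rw [Finset.sum_congr rfl (fun m hm => ?_)]
    · exact tele_sum (fun i => (γ * 2 ^ i) ^ σ) m₀ N hm₀N
    · rw [if_pos]
      rw [hK]
      have h3 := (Finset.mem_Ico.mp hm).2
      omega
  rw [h1]
  have hNlt : γ * 2 ^ N < t := by
    have : (N - 1) < K := by omega
    have := (hK (N - 1)).mpr this
    rwa [show N - 1 + 1 = N by omega] at this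
  have : (γ * 2 ^ N) ^ σ ≤ t ^ σ := Real.rpow_le_rpow (hpos N).le hNlt.le hσ0
  have hge : (0:ℝ) ≤ (γ * 2 ^ m₀) ^ σ := Real.rpow_nonneg (hpos m₀).le σ
  linarith


/-- good level selection: for nonnegative `g ∈ L^σ(ℝ^{d+1})`,
`m₀ ∈ ℕ` and `γ > 0` there is `m₁ ∈ {m₀, …, 2m₀−1}` such that the level
`λ = γ2^{m₁+1}` satisfies `λ^σ ℒ^{d+1}({|g|>λ}) ≤ (c/m₀) ∫ |g|^σ`, with `c`
depending only on `σ`. -/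
theorem good_level_selection (σ : ℝ) (hσ : 1 < σ) :
    ∃ c > (0 : ℝ), ∀ (d : ℕ) (g : Euc (d + 1) → ℝ),
      MemLp g (ENNReal.ofReal σ) volume → (∀ x, 0 ≤ g x) →
      ∀ m₀ : ℕ, 1 ≤ m₀ → ∀ γ : ℝ, 0 < γ →
        ∃ m₁ : ℕ, m₀ ≤ m₁ ∧ m₁ ≤ 2 * m₀ - 1 ∧
          (γ * 2 ^ (m₁ + 1)) ^ σ *
              (volume {x : Euc (d + 1) | γ * 2 ^ (m₁ + 1) < |g x|}).toReal ≤
            (c / (m₀ : ℝ)) * ∫ x : Euc (d + 1), |g x| ^ σ := by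
  refine ⟨2, two_pos, ?_⟩
  intro d g hg hg0 m₀ hm₀ γ hγ
  have hσ0 : (0:ℝ) < σ := lt_trans one_pos hσ
  -- measurable representative
  obtain ⟨g', hg'sm, hgg'⟩ := hg.1
  have hg'm : Measurable g' := hg'sm.measurable
  have hS : ∀ m : ℕ, MeasurableSet {x : Euc (d+1) | γ * 2 ^ (m + 1) < |g' x|} :=
    fun m => measurableSet_lt measurable_const hg'm.abs
  set S : ℕ → Set (Euc (d+1)) := fun m => {x | γ * 2 ^ (m + 1) < |g' x|} with hSdef
  have hvol : ∀ m : ℕ, volume {x : Euc (d+1) | γ * 2 ^ (m + 1) < |g x|} = volume (S m) := by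
    intro m
    apply measure_congr
    filter_upwards [hgg'] with x hx
    show (γ * 2 ^ (m + 1) < |g x|) = (γ * 2 ^ (m + 1) < |g' x|)
    rw [hx]
  -- integrability
  have hp0 : (ENNReal.ofReal σ) ≠ 0 := by
    simp [ENNReal.ofReal_eq_zero, not_le, hσ0]
  have hInt' : Integrable (fun x => ‖g x‖ ^ σ) volume := by
    have := hg.integrable_norm_rpow hp0 ENNReal.ofReal_ne_top
    rwa [ENNReal.toReal_ofReal hσ0.le] at this
  have hInt : Integrable (fun x : Euc (d+1) => |g' x| ^ σ) volume := by
    refine hInt'.congr ?_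
    filter_upwards [hgg'] with x hx
    rw [Real.norm_eq_abs, hx]
  set I := ∫⁻ x : Euc (d+1), ENNReal.ofReal (|g' x| ^ σ) with hIdef
  have hIlt : I < ⊤ := hInt.lintegral_lt_top
  have hIeq : ∫ x : Euc (d+1), |g x| ^ σ = I.toReal := by
    rw [integral_congr_ae (g := fun x => |g' x| ^ σ) (by filter_upwards [hgg'] with x hx; rw [hx])]
    rw [integral_eq_lintegral_of_nonneg_ae]
    · exact Filter.Eventually.of_forall fun x => Real.rpow_nonneg (abs_nonneg _) σ
    · exact (hg'm.abs.pow_const σ).aestronglyMeasurable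
  -- Chebyshev: finiteness of level set measures
  have hcheb : ∀ m : ℕ, ENNReal.ofReal ((γ * 2 ^ (m + 1)) ^ σ) * volume (S m) ≤ I := by
    intro m
    have h1 : ENNReal.ofReal ((γ * 2 ^ (m + 1)) ^ σ) * volume (S m)
        = ∫⁻ x in S m, ENNReal.ofReal ((γ * 2 ^ (m + 1)) ^ σ) := by
      rw [setLIntegral_const]
    rw [h1]
    refine le_trans (setLIntegral_mono (hg'm.abs.pow_const σ).ennreal_ofReal ?_)
      (setLIntegral_le_lintegral _ _)
    intro x hx
    have hx' : γ * 2 ^ (m + 1) < |g' x| := hx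
    exact ENNReal.ofReal_le_ofReal
      (Real.rpow_le_rpow (by positivity) hx'.le hσ0.le)
  have hb_pos : ∀ m : ℕ, (0:ℝ) < (γ * 2 ^ (m + 1)) ^ σ := fun m =>
    Real.rpow_pos_of_pos (by positivity) σ
  have hSfin : ∀ m : ℕ, volume (S m) < ⊤ := by
    intro m
    by_contra h
    push_neg at h
    have hc := hcheb m
    rw [top_le_iff.mp h, ENNReal.mul_top (by
      simp [ENNReal.ofReal_eq_zero, not_le, hb_pos m])] at hc
    exact hIlt.ne (top_le_iff.mp hc)
  -- main sum bound
  have hsum : ∑ m ∈ Finset.Ico m₀ (2 * m₀),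
      ENNReal.ofReal ((γ * 2 ^ (m + 1)) ^ σ - (γ * 2 ^ m) ^ σ) * volume (S m) ≤ I := by
    have heach : ∀ m ∈ Finset.Ico m₀ (2 * m₀),
        ENNReal.ofReal ((γ * 2 ^ (m + 1)) ^ σ - (γ * 2 ^ m) ^ σ) * volume (S m)
        = ∫⁻ x, (S m).indicator
            (fun _ => ENNReal.ofReal ((γ * 2 ^ (m + 1)) ^ σ - (γ * 2 ^ m) ^ σ)) x := by
      intro m _
      rw [lintegral_indicator (hS m), setLIntegral_const]
    rw [Finset.sum_congr rfl heach,
      ← lintegral_finset_sum _ (fun m _ => (measurable_const.indicator (hS m)))]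
    refine lintegral_mono fun x => ?_
    have key := ptwise σ hσ.le hγ m₀ (2 * m₀) hm₀ (|g' x|) (abs_nonneg _)
    calc ∑ m ∈ Finset.Ico m₀ (2 * m₀), (S m).indicator
            (fun _ => ENNReal.ofReal ((γ * 2 ^ (m + 1)) ^ σ - (γ * 2 ^ m) ^ σ)) x
        = ∑ m ∈ Finset.Ico m₀ (2 * m₀), ENNReal.ofReal
            (if γ * 2 ^ (m + 1) < |g' x| then (γ * 2 ^ (m + 1)) ^ σ - (γ * 2 ^ m) ^ σ else 0) := by
          refine Finset.sum_congr rfl fun m _ => ?_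
          rw [Set.indicator_apply]
          simp only [hSdef, Set.mem_setOf_eq]
          by_cases hx : γ * 2 ^ (m + 1) < |g' x|
          · rw [if_pos hx, if_pos hx]
          · rw [if_neg hx, if_neg hx, ENNReal.ofReal_zero]
      _ = ENNReal.ofReal (∑ m ∈ Finset.Ico m₀ (2 * m₀),
            if γ * 2 ^ (m + 1) < |g' x| then (γ * 2 ^ (m + 1)) ^ σ - (γ * 2 ^ m) ^ σ else 0) := by
          rw [ENNReal.ofReal_sum_of_nonneg]
          intro m _
          split_ifs
          · have : (γ * 2 ^ m) ^ σ ≤ (γ * 2 ^ (m + 1)) ^ σ :=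
              Real.rpow_le_rpow (by positivity)
                (mul_le_mul_of_nonneg_left (pow_le_pow_right₀ one_le_two (Nat.le_succ m)) hγ.le)
                hσ0.le
            linarith
          · exact le_refl 0
      _ ≤ ENNReal.ofReal (|g' x| ^ σ) := ENNReal.ofReal_le_ofReal key
  -- full level term ≤ twice annulus term
  have hA : ∀ m : ℕ, ENNReal.ofReal ((γ * 2 ^ (m + 1)) ^ σ) * volume (S m)
      ≤ 2 * (ENNReal.ofReal ((γ * 2 ^ (m + 1)) ^ σ - (γ * 2 ^ m) ^ σ) * volume (S m)) := by
    intro m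
    rw [← mul_assoc]
    refine mul_le_mul_left ?_ _
    have h2σ : (2:ℝ) ≤ (2:ℝ) ^ σ := by
      calc (2:ℝ) = 2 ^ (1:ℝ) := (Real.rpow_one 2).symm
        _ ≤ 2 ^ σ := Real.rpow_le_rpow_of_exponent_le one_le_two hσ.le
    have hbb : (γ * 2 ^ (m + 1)) ^ σ = 2 ^ σ * (γ * 2 ^ m) ^ σ := by
      rw [show γ * 2 ^ (m + 1) = 2 * (γ * 2 ^ m) by ring,
        Real.mul_rpow zero_le_two (by positivity)]
    have hb'pos : (0:ℝ) < (γ * 2 ^ m) ^ σ := Real.rpow_pos_of_pos (by positivity) σ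
    have hkey : (γ * 2 ^ (m + 1)) ^ σ ≤ 2 * ((γ * 2 ^ (m + 1)) ^ σ - (γ * 2 ^ m) ^ σ) := by
      nlinarith
    calc ENNReal.ofReal ((γ * 2 ^ (m + 1)) ^ σ)
        ≤ ENNReal.ofReal (2 * ((γ * 2 ^ (m + 1)) ^ σ - (γ * 2 ^ m) ^ σ)) :=
          ENNReal.ofReal_le_ofReal hkey
      _ = 2 * ENNReal.ofReal ((γ * 2 ^ (m + 1)) ^ σ - (γ * 2 ^ m) ^ σ) := by
          rw [ENNReal.ofReal_mul zero_le_two, ENNReal.ofReal_ofNat]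
  have hsum2 : ∑ m ∈ Finset.Ico m₀ (2 * m₀),
      ENNReal.ofReal ((γ * 2 ^ (m + 1)) ^ σ) * volume (S m) ≤ 2 * I := by
    calc ∑ m ∈ Finset.Ico m₀ (2 * m₀),
          ENNReal.ofReal ((γ * 2 ^ (m + 1)) ^ σ) * volume (S m)
        ≤ ∑ m ∈ Finset.Ico m₀ (2 * m₀),
          2 * (ENNReal.ofReal ((γ * 2 ^ (m + 1)) ^ σ - (γ * 2 ^ m) ^ σ) * volume (S m)) :=
        Finset.sum_le_sum fun m _ => hA m
      _ = 2 * ∑ m ∈ Finset.Ico m₀ (2 * m₀),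
          ENNReal.ofReal ((γ * 2 ^ (m + 1)) ^ σ - (γ * 2 ^ m) ^ σ) * volume (S m) :=
        (Finset.mul_sum _ _ _).symm
      _ ≤ 2 * I := mul_le_mul_right hsum 2
  -- pass to reals
  set a : ℕ → ℝ := fun m => (γ * 2 ^ (m + 1)) ^ σ * (volume (S m)).toReal with hadef
  have hane : ∀ m : ℕ, (ENNReal.ofReal ((γ * 2 ^ (m + 1)) ^ σ) * volume (S m)).toReal = a m := by
    intro m
    rw [ENNReal.toReal_mul, ENNReal.toReal_ofReal (hb_pos m).le]
  have hsum3 : ∑ m ∈ Finset.Ico m₀ (2 * m₀), a m ≤ 2 * I.toReal := by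
    have hne : ∀ m ∈ Finset.Ico m₀ (2 * m₀),
        ENNReal.ofReal ((γ * 2 ^ (m + 1)) ^ σ) * volume (S m) ≠ ⊤ := fun m _ =>
      ENNReal.mul_ne_top ENNReal.ofReal_ne_top (hSfin m).ne
    calc ∑ m ∈ Finset.Ico m₀ (2 * m₀), a m
        = (∑ m ∈ Finset.Ico m₀ (2 * m₀),
            ENNReal.ofReal ((γ * 2 ^ (m + 1)) ^ σ) * volume (S m)).toReal := by
          rw [ENNReal.toReal_sum hne]
          exact (Finset.sum_congr rfl fun m _ => (hane m).symm)
      _ ≤ (2 * I).toReal := ENNReal.toReal_mono (ENNReal.mul_ne_top (by simp) hIlt.ne) hsum2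
      _ = 2 * I.toReal := by rw [ENNReal.toReal_mul, ENNReal.toReal_ofNat]
  -- pigeonhole
  have hne' : (Finset.Ico m₀ (2 * m₀)).Nonempty := by
    rw [Finset.nonempty_Ico]; omega
  have hsc : (∑ _m ∈ Finset.Ico m₀ (2 * m₀), ((∑ m ∈ Finset.Ico m₀ (2 * m₀), a m) / (m₀:ℝ)))
      = ∑ m ∈ Finset.Ico m₀ (2 * m₀), a m := by
    rw [Finset.sum_const, Nat.card_Ico, nsmul_eq_mul]
    have h2 : ((2 * m₀ - m₀ : ℕ) : ℝ) = (m₀ : ℝ) := by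
      congr 1; omega
    rw [h2, mul_div_cancel₀ _ (Nat.cast_ne_zero.mpr (by omega))]
  obtain ⟨m₁, hm₁mem, hle⟩ := Finset.exists_le_of_sum_le hne' (le_of_eq hsc.symm)
  obtain ⟨hm₁l, hm₁r⟩ := Finset.mem_Ico.mp hm₁mem
  refine ⟨m₁, hm₁l, by omega, ?_⟩
  rw [hvol m₁, hIeq]
  have hm₀pos : (0:ℝ) < (m₀:ℝ) := Nat.cast_pos.mpr (by omega)
  calc (γ * 2 ^ (m₁ + 1)) ^ σ * (volume (S m₁)).toReal
      = a m₁ := rfl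
    _ ≤ (∑ m ∈ Finset.Ico m₀ (2 * m₀), a m) / (m₀:ℝ) := hle
    _ ≤ (2 * I.toReal) / (m₀:ℝ) := by gcongr
    _ = 2 / (m₀:ℝ) * I.toReal := by ring
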